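/- Let G be a group with a finite generating set and associated word metric. If H₀ ≤ H ≤ G with [H : H₀] < ∞ and H is quasiconvex (every geodesic word between elements of H stays in a bounded neighborhood of H), then H₀ is quasiconvex if and only if H is quasiconvex; in particular a finite-index subgroup of a quasiconvex subgroup is quasiconvex. -/
import Mathlib


/-- `S` is a finite generating set of the group `G`. -/
def IsFinGenSet {G : Type*} [Group G] (S : Set G) : Prop :=
  S.Finite ∧ Subgroup.closure S = ⊤

/-- The word length of `g` with respect to the (symmetrized) generating set `S`. -/
noncomputable def wordLength {G : Type*} [Group G] (S : Set G) (g : G) : ℕ :=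
  sInf {n : ℕ | ∃ w : List G, w.length = n ∧ (∀ x ∈ w, x ∈ S ∨ x⁻¹ ∈ S) ∧ w.prod = g}

/-- The word metric on `G` associated to the generating set `S`. -/
noncomputable def wordDist {G : Type*} [Group G] (S : Set G) (g h : G) : ℕ :=
  wordLength S (g⁻¹ * h)

/-- `p` is a geodesic (edge-)path in the Cayley graph `Γ(G,S)` from `g` to `h`. -/
def IsGeodesic {G : Type*} [Group G] (S : Set G) (p : List G) (g h : G) : Prop :=
  p.head? = some g ∧ p.getLast? = some h ∧
  List.Chain' (fun a b => wordDist S a b = 1) p ∧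
  p.length = wordDist S g h + 1

/-- A subgroup `H ≤ G` is quasiconvex with respect to the generating set `S` if every
geodesic in the Cayley graph with both endpoints in `H` stays in a bounded
neighborhood of `H`. -/
def IsQuasiconvex {G : Type*} [Group G] (S : Set G) (H : Subgroup G) : Prop :=
  ∃ ε : ℕ, ∀ g ∈ H, ∀ h ∈ H, ∀ p : List G, IsGeodesic S p g h →
    ∀ x ∈ p, ∃ k ∈ H, wordDist S x k ≤ ε


private lemma wordLength_set_nonempty {G : Type*} [Group G] (S : Set G)
    (hS : IsFinGenSet S) (g : G) :
    {n : ℕ | ∃ w : List G, w.length = n ∧ (∀ x ∈ w, x ∈ S ∨ x⁻¹ ∈ S) ∧ w.prod = g}.Nonempty := by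
  have hg : g ∈ Submonoid.closure (S ∪ S⁻¹) := by
    rw [← Subgroup.closure_toSubmonoid, hS.2]; trivial
  obtain ⟨l, hl, hprod⟩ := Submonoid.exists_list_of_mem_closure hg
  refine ⟨l.length, l, rfl, fun x hx => ?_, hprod⟩
  rcases hl x hx with h | h
  · exact Or.inl h
  · exact Or.inr (Set.mem_inv.mp h)

private lemma wordLength_mul_le {G : Type*} [Group G] (S : Set G)
    (hS : IsFinGenSet S) (a b : G) :
    wordLength S (a * b) ≤ wordLength S a + wordLength S b := by
  unfold wordLength
  obtain ⟨wa, hwa, hwa', hwa''⟩ := Nat.sInf_mem (wordLength_set_nonempty S hS a)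
  obtain ⟨wb, hwb, hwb', hwb''⟩ := Nat.sInf_mem (wordLength_set_nonempty S hS b)
  have : sInf {n : ℕ | ∃ w : List G, w.length = n ∧ (∀ x ∈ w, x ∈ S ∨ x⁻¹ ∈ S) ∧ w.prod = a}
      + sInf {n : ℕ | ∃ w : List G, w.length = n ∧ (∀ x ∈ w, x ∈ S ∨ x⁻¹ ∈ S) ∧ w.prod = b} ∈
      {n : ℕ | ∃ w : List G, w.length = n ∧ (∀ x ∈ w, x ∈ S ∨ x⁻¹ ∈ S) ∧ w.prod = a * b} := by
    refine ⟨wa ++ wb, ?_, ?_, ?_⟩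
    · simp [hwa, hwb]
    · intro x hx
      rcases List.mem_append.mp hx with h | h
      · exact hwa' x h
      · exact hwb' x h
    · simp [hwa'', hwb'']
  exact Nat.sInf_le this

private lemma wordDist_triangle {G : Type*} [Group G] (S : Set G)
    (hS : IsFinGenSet S) (x y z : G) :
    wordDist S x z ≤ wordDist S x y + wordDist S y z := by
  have : x⁻¹ * z = (x⁻¹ * y) * (y⁻¹ * z) := by group
  unfold wordDist
  rw [this]
  exact wordLength_mul_le S hS _ _

private lemma close_to_subgroup {G : Type*} [Group G] (S : Set G)
    (H₀ H : Subgroup G) (hle : H₀ ≤ H) (hfin : (H₀.subgroupOf H).index ≠ 0) :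
    ∃ C : ℕ, ∀ h ∈ H, ∃ k ∈ H₀, wordDist S h k ≤ C := by
  have hfin' : Finite (H ⧸ H₀.subgroupOf H) := by
    rw [Subgroup.index] at hfin
    exact Nat.finite_of_card_ne_zero hfin
  have : Fintype (H ⧸ H₀.subgroupOf H) := Fintype.ofFinite _
  refine ⟨Finset.univ.sup (fun q : H ⧸ H₀.subgroupOf H =>
    wordLength S ((Quotient.out q : H) : G)), ?_⟩
  intro h hmem
  set hh : H := ⟨h, hmem⟩ with hhdef
  set q : H ⧸ H₀.subgroupOf H := QuotientGroup.mk hh⁻¹ with hq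
  set r : H := Quotient.out q with hr
  have hout : QuotientGroup.mk r = q := Quotient.out_eq' q
  have hs : r⁻¹ * hh⁻¹ ∈ H₀.subgroupOf H := by
    rw [hq] at hout
    exact (QuotientGroup.eq).mp hout
  set s : H := r⁻¹ * hh⁻¹ with hsdef
  have hsH₀ : (s : G) ∈ H₀ := hs
  refine ⟨((s⁻¹ : H) : G), H₀.inv_mem hsH₀, ?_⟩
  have key : h⁻¹ * ((s⁻¹ : H) : G) = ((r : H) : G) := by
    have : hh⁻¹ * s⁻¹ = r := by rw [hsdef]; group
    calc h⁻¹ * ((s⁻¹ : H) : G) = ((hh⁻¹ * s⁻¹ : H) : G) := by simp [hhdef]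
    _ = ((r : H) : G) := by rw [this]
  unfold wordDist
  rw [key]
  exact Finset.le_sup (f := fun q : H ⧸ H₀.subgroupOf H =>
    wordLength S ((Quotient.out q : H) : G)) (Finset.mem_univ q)

/-- if `H₀ ≤ H ≤ G` with `[H : H₀] < ∞` and `H` is quasiconvex,
then `H₀` is quasiconvex iff `H` is quasiconvex; in particular a finite index
subgroup of a quasiconvex subgroup is quasiconvex. -/
theorem stmt4 {G : Type*} [Group G] (S : Set G) (hS : IsFinGenSet S)
    (H₀ H : Subgroup G) (hle : H₀ ≤ H) (hfin : (H₀.subgroupOf H).index ≠ 0)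
    (hH : IsQuasiconvex S H) :
    IsQuasiconvex S H₀ ↔ IsQuasiconvex S H := by
  constructor
  · intro _; exact hH
  · intro _
    obtain ⟨ε, hε⟩ := hH
    obtain ⟨C, hC⟩ := close_to_subgroup S H₀ H hle hfin
    refine ⟨ε + C, ?_⟩
    intro g hg h hh p hp x hx
    obtain ⟨k, hkH, hk⟩ := hε g (hle hg) h (hle hh) p hp x hx
    obtain ⟨k', hk'H₀, hk'⟩ := hC k hkH
    refine ⟨k', hk'H₀, ?_⟩
    calc wordDist S x k' ≤ wordDist S x k + wordDist S k k' := wordDist_triangle S hS x k k'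
    _ ≤ ε + C := Nat.add_le_add hk hk'
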